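/- Let B ∈ {0,1} be uniform and Y be drawn from μ if B=0 and from π* if B=1, on a finite set with μ, π* everywhere positive. Then minimizing E[KL(P(B|Y) ‖ Q_θ(B|Y))] over θ, with Q_θ(B=1|y) = σ(f_θ(y)) and π* = μ·e^{r/α}/Z, is equivalent (up to an additive constant in θ) to minimizing −Σ_y μ(y)[ (e^{r(y)/α}/Z)·log σ(f_θ(y)) + log σ(−f_θ(y)) ]. -/

import Mathlib

open Finset Real

noncomputable def sigmoid (t : ℝ) : ℝ := 1 / (1 + Real.exp (-t))

/-!
The Bayes posterior of `B = 1` given `Y = y` is `p = π*(y) / (μ(y) + π*(y))` and `Y` has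
marginal `m = (μ + π*) / 2`. Splitting the logarithms of quotients, the posterior KL divergence
is minus the binary entropy of `p` (independent of θ) plus the cross entropy of `p` against
the model; multiplying by `m` turns the weights `m p` and `m (1 - p)` back into
`π* / 2 = μ e^{r/α} / (2Z)` and `μ / 2`, the weights of the NCA loss.
-/

lemma sigmoid_eq_real_sigmoid (t : ℝ) : _root_.sigmoid t = Real.sigmoid t := by
  rw [_root_.sigmoid, Real.sigmoid_def, one_div]

lemma Real.mul_log_div_eq_sub (x : ℝ) {s : ℝ} (hs : s ≠ 0) :
    x * log (x / s) = x * log x - x * log s := by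
  rcases eq_or_ne x 0 with rfl | hx
  · simp
  · rw [log_div hx hs, mul_sub]

/-- `b / (a + b)` is the posterior of the second component of a mixture with weights `a, b`:
its KL divergence to a model `(q₁, q₀)`, weighted by the mass `a + b`, is the cross entropy with
the unnormalised weights `b, a` up to a model-independent term. -/
lemma Real.mul_binaryKL_posterior {a b q₁ q₀ : ℝ} (hab : a + b ≠ 0) (hq₁ : q₁ ≠ 0)
    (hq₀ : q₀ ≠ 0) :
    (a + b) * (b / (a + b) * log (b / (a + b) / q₁) +
        (1 - b / (a + b)) * log ((1 - b / (a + b)) / q₀)) =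
      -(b * log q₁ + a * log q₀) - (a + b) * binEntropy (b / (a + b)) := by
  have hb : (a + b) * (b / (a + b)) = b := mul_div_cancel₀ b hab
  have ha : (a + b) * (1 - b / (a + b)) = a := by
    rw [mul_one_sub, hb, add_sub_cancel_right]
  rw [mul_log_div_eq_sub _ hq₁, mul_log_div_eq_sub _ hq₀,
    binEntropy_eq_negMulLog_add_negMulLog_one_sub, negMulLog, negMulLog]
  linear_combination (-log q₁) * hb + (-log q₀) * ha

theorem nca_kl_equiv_weighted_bce_general
    {Y Θ : Type*} [Fintype Y]
    (μ : Y → ℝ) (hμpos : ∀ y, 0 < μ y)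
    (r : Y → ℝ) (α : ℝ)
    (Z : ℝ) (hZ : Z = ∑ y, μ y * Real.exp (r y / α))
    (piStar : Y → ℝ) (hπ : ∀ y, piStar y = μ y * Real.exp (r y / α) / Z)
    (f : Θ → Y → ℝ)
    (m : Y → ℝ) (hm : ∀ y, m y = (1 / 2) * μ y + (1 / 2) * piStar y)
    (P1 : Y → ℝ) (hP1 : ∀ y, P1 y = piStar y / (μ y + piStar y))
    (KLobj : Θ → ℝ)
    (hKLobj : ∀ θ, KLobj θ = ∑ y, m y *
      (P1 y * Real.log (P1 y / _root_.sigmoid (f θ y)) +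
       (1 - P1 y) * Real.log ((1 - P1 y) / _root_.sigmoid (-(f θ y)))))
    (NCAobj : Θ → ℝ)
    (hNCAobj : ∀ θ, NCAobj θ = - ∑ y, μ y *
      ((Real.exp (r y / α) / Z) * Real.log (_root_.sigmoid (f θ y)) +
        Real.log (_root_.sigmoid (-(f θ y))))) :
    ∃ C : ℝ, ∀ θ : Θ, KLobj θ = (1 / 2) * NCAobj θ + C := by
  have hZ_nonneg : 0 ≤ Z := hZ ▸ sum_nonneg fun y _ => (mul_pos (hμpos y) (exp_pos _)).le
  have hmass_pos (y : Y) : 0 < μ y + piStar y := by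
    have : 0 ≤ piStar y := hπ y ▸ div_nonneg (mul_pos (hμpos y) (exp_pos _)).le hZ_nonneg
    linarith [hμpos y]
  refine ⟨-∑ y, m y * binEntropy (P1 y), fun θ => ?_⟩
  have hpointwise (y : Y) :
      m y * (P1 y * log (P1 y / _root_.sigmoid (f θ y)) +
        (1 - P1 y) * log ((1 - P1 y) / _root_.sigmoid (-(f θ y)))) =
      1 / 2 * -(μ y * (exp (r y / α) / Z * log (_root_.sigmoid (f θ y)) +
        log (_root_.sigmoid (-(f θ y))))) + -(m y * binEntropy (P1 y)) := by
    have h := mul_binaryKL_posterior (hmass_pos y).ne' (Real.sigmoid_pos (f θ y)).ne'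
      (Real.sigmoid_pos (-(f θ y))).ne'
    rw [← hP1 y, ← sigmoid_eq_real_sigmoid, ← sigmoid_eq_real_sigmoid] at h
    rw [hm y]
    linear_combination (1 / 2) * h + (-(1 / 2) * log (_root_.sigmoid (f θ y))) * hπ y
  rw [hKLobj, hNCAobj, sum_congr rfl fun y _ => hpointwise y, sum_add_distrib, ← mul_sum,
    sum_neg_distrib, sum_neg_distrib]

/-- NCA Theorem 2(a): the expected posterior-KL objective of the binary NCE
classification (B uniform, Y ~ μ if B=0 and Y ~ π* = μ·e^{r/α}/Z if B=1, model
posterior Q_θ(B=1|y) = σ(f_θ(y))) equals, up to a positive scaling and an additive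
constant independent of θ, the importance-weighted binary cross-entropy NCA loss. -/
theorem nca_kl_equiv_weighted_bce
    {Y Θ : Type*} [Fintype Y]
    (μ : Y → ℝ) (hμpos : ∀ y, 0 < μ y) (hμsum : ∑ y, μ y = 1)
    (r : Y → ℝ) (α : ℝ) (hα : 0 < α)
    (Z : ℝ) (hZ : Z = ∑ y, μ y * Real.exp (r y / α))
    (piStar : Y → ℝ) (hπ : ∀ y, piStar y = μ y * Real.exp (r y / α) / Z)
    (f : Θ → Y → ℝ)
    (m : Y → ℝ) (hm : ∀ y, m y = (1 / 2) * μ y + (1 / 2) * piStar y)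
    (P1 : Y → ℝ) (hP1 : ∀ y, P1 y = piStar y / (μ y + piStar y))
    (KLobj : Θ → ℝ)
    (hKLobj : ∀ θ, KLobj θ = ∑ y, m y *
      (P1 y * Real.log (P1 y / _root_.sigmoid (f θ y)) +
       (1 - P1 y) * Real.log ((1 - P1 y) / _root_.sigmoid (-(f θ y)))))
    (NCAobj : Θ → ℝ)
    (hNCAobj : ∀ θ, NCAobj θ = - ∑ y, μ y *
      ((Real.exp (r y / α) / Z) * Real.log (_root_.sigmoid (f θ y)) +
        Real.log (_root_.sigmoid (-(f θ y))))) :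
    ∃ C : ℝ, ∀ θ : Θ, KLobj θ = (1 / 2) * NCAobj θ + C :=
  nca_kl_equiv_weighted_bce_general μ hμpos r α Z hZ piStar hπ f m hm P1 hP1 KLobj hKLobj NCAobj
    hNCAobj
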